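/- Let S be a module over the Clifford algebra of a 2-dimensional inner product space, with skew-adjoint Clifford multiplication γ and orthonormal basis (e₁, e₂). For χ ∈ S × S the norm of the Q-projection satisfies the scaling law: if χ is replaced by e^{-u/2}χ and simultaneously the metric is rescaled by e^{2u} (so the orthonormal basis becomes e^{-u}e_α and spinor inner products are preserved by the isometric identification), then |Qχ|² rescales by e^{-u}. Combined with the rescaling |e^{-u/2}ψ|² = e^{-u}|ψ|², the product |Qχ|²|ψ|² rescales by e^{-2u}, and hence the term |Qχ|²|ψ|² dvol_g is invariant under the rescaled conformal transformation in dimension 2. -/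

import Mathlib

/-!
An isometry intertwining the Clifford multiplications carries `Qχ` to `Q'(βχ)`, and `Q` is
linear, so replacing `χ` by `e^{-u/2}βχ` multiplies each component of `Qχ` by `e^{-u/2}`
and leaves its length otherwise unchanged; the same holds for `ψ`. Hence both squared norms
scale by `e^{-u}`, their product by `e^{-2u}`, and the factor `e^{2u}` of the volume form
cancels it.
-/

open Real

-- The components `(Qχ)_b = -½ ∑_α e_α · e_b · χ_α` in an orthonormal frame `(e_α)`.
noncomputable def cliffordQ {ι S : Type*} [Fintype ι] [AddCommGroup S] [Module ℝ S]
    (γ : ι → Module.End ℝ S) (χ : ι → S) (b : ι) : S :=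
  -((1/2 : ℝ) • ∑ α, γ α (γ b (χ α)))

theorem cliffordQ_smul_comp {ι S S' F : Type*} [Fintype ι]
    [AddCommGroup S] [Module ℝ S] [AddCommGroup S'] [Module ℝ S']
    [FunLike F S S'] [LinearMapClass F ℝ S S'] {β : F}
    {γ : ι → Module.End ℝ S} {γ' : ι → Module.End ℝ S'}
    (hcompat : ∀ α s, γ' α (β s) = β (γ α s)) (t : ℝ) (χ : ι → S) (b : ι) :
    cliffordQ γ' (fun α => t • β (χ α)) b = t • β (cliffordQ γ χ b) := by
  simp only [cliffordQ, map_smul, hcompat, map_neg, map_sum, ← Finset.smul_sum, smul_neg,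
    smul_comm t]

theorem LinearIsometry.sum_norm_smul_apply_sq {ι S S' : Type*} [Fintype ι]
    [SeminormedAddCommGroup S] [NormedSpace ℝ S] [SeminormedAddCommGroup S'] [NormedSpace ℝ S']
    (β : S →ₗᵢ[ℝ] S') (t : ℝ) (v : ι → S) :
    ∑ i, ‖t • β (v i)‖ ^ 2 = t ^ 2 * ∑ i, ‖v i‖ ^ 2 := by
  simp only [norm_smul, β.norm_map, mul_pow, Real.norm_eq_abs, sq_abs, Finset.mul_sum]

theorem Real.exp_neg_half_sq (u : ℝ) : exp (-(u / 2)) ^ 2 = exp (-u) := by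
  rw [← exp_nat_mul]
  ring_nf

/-- Scaling behaviour of the gravitino terms under the rescaled
conformal transformation.  In components with respect to orthonormal frames,
with `β : S → S'` the isometric identification of spinor bundles intertwining the
Clifford multiplications, `|Q'(e^{-u/2}(β⊗b)χ)|² = e^{-u}|Qχ|²`,
`|e^{-u/2}(β⊗1)ψ|² = e^{-u}|ψ|²`, their product rescales by `e^{-2u}`, and together
with `dvol_{e^{2u}g} = e^{2u} dvol_g` the term `|Qχ|²|ψ|² dvol_g` is invariant. -/
theorem gravitino_norm_rescaled_conformal
    (S S' : Type*) [NormedAddCommGroup S] [InnerProductSpace ℝ S]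
    [NormedAddCommGroup S'] [InnerProductSpace ℝ S']
    (β : S →ₗᵢ[ℝ] S')
    (γ : Fin 2 → Module.End ℝ S) (γ' : Fin 2 → Module.End ℝ S')
    (hcompat : ∀ (α : Fin 2) (s : S), γ' α (β s) = β (γ α s))
    (u : ℝ) {n : ℕ} (χ : Fin 2 → S) (ψ : Fin n → S) :
    (∑ b : Fin 2,
        ‖-((1/2 : ℝ) • ∑ α, γ' α (γ' b (Real.exp (-(u/2)) • β (χ α))))‖ ^ 2
      = Real.exp (-u) * ∑ b : Fin 2, ‖-((1/2 : ℝ) • ∑ α, γ α (γ b (χ α)))‖ ^ 2) ∧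
    (∑ i, ‖Real.exp (-(u/2)) • β (ψ i)‖ ^ 2 = Real.exp (-u) * ∑ i, ‖ψ i‖ ^ 2) ∧
    ((∑ b : Fin 2,
        ‖-((1/2 : ℝ) • ∑ α, γ' α (γ' b (Real.exp (-(u/2)) • β (χ α))))‖ ^ 2) *
        (∑ i, ‖Real.exp (-(u/2)) • β (ψ i)‖ ^ 2)
      = Real.exp (-(2*u)) *
          ((∑ b : Fin 2, ‖-((1/2 : ℝ) • ∑ α, γ α (γ b (χ α)))‖ ^ 2) *
            (∑ i, ‖ψ i‖ ^ 2))) ∧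
    (Real.exp (2*u) *
        ((∑ b : Fin 2,
          ‖-((1/2 : ℝ) • ∑ α, γ' α (γ' b (Real.exp (-(u/2)) • β (χ α))))‖ ^ 2) *
          (∑ i, ‖Real.exp (-(u/2)) • β (ψ i)‖ ^ 2))
      = (∑ b : Fin 2, ‖-((1/2 : ℝ) • ∑ α, γ α (γ b (χ α)))‖ ^ 2) *
          (∑ i, ‖ψ i‖ ^ 2)) := by
  have hχ : ∑ b, ‖cliffordQ γ' (fun α => exp (-(u/2)) • β (χ α)) b‖ ^ 2
      = exp (-u) * ∑ b, ‖cliffordQ γ χ b‖ ^ 2 := by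
    simp only [cliffordQ_smul_comp hcompat]
    rw [β.sum_norm_smul_apply_sq, exp_neg_half_sq]
  have hψ : ∑ i, ‖exp (-(u/2)) • β (ψ i)‖ ^ 2 = exp (-u) * ∑ i, ‖ψ i‖ ^ 2 := by
    rw [β.sum_norm_smul_apply_sq, exp_neg_half_sq]
  dsimp only [cliffordQ] at hχ
  refine ⟨hχ, hψ, ?_, ?_⟩
  · rw [hχ, hψ, ← mul_neg, two_mul, exp_add]
    ring
  · rw [hχ, hψ, exp_neg, two_mul, exp_add]
    field_simp
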